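/- Let ξ be a random variable on [-δ,δ] with the scaled symmetric Beta(α,α) density p_{α,δ}(t) = (2δ)^{1-2α}/B(α,α)·(δ²-t²)^{α-1}, α>0, δ>0. Then for any u ∈ ℝ, the third central moment of η = (ξ-u)² equals (48αδ⁴/((2α+1)²(2α+3)))·[u² + δ²(2α-1)/(3(2α+5)(2α+1))]. -/

import Mathlib

open MeasureTheory ProbabilityTheory
open scoped ENNReal

/-- The scaled symmetric Beta(α,α) density on (-δ,δ). -/
noncomputable def betaDensity (α δ : ℝ) (t : ℝ) : ℝ :=
  (2 * δ) ^ (1 - 2 * α) / (Real.Gamma α * Real.Gamma α / Real.Gamma (2 * α)) *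
    (δ ^ 2 - t ^ 2) ^ (α - 1)

/-!
Integrating by parts against `(δ² - t²) ^ α`, whose derivative is `-2αt (δ² - t²) ^ (α - 1)`,
gives the Stein identity `2α E[ξ ^ (n + 1)] = n E[(δ² - ξ²) ξ ^ (n - 1)]`. Hence the mean
vanishes and `(2α + n + 1) E[ξ ^ (n + 2)] = (n + 1) δ² E[ξ ^ n]`, so the odd moments vanish and the
even ones are `E[ξ ^ 2k] = ∏_{i<k} (2i + 1) δ² / (2α + 2i + 1)`; the Beta normalising constant is
never evaluated, only `E[1] = 1` is used. For a symmetric law, expanding the cube gives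
`E[((ξ - u)² - E(ξ - u)²)³] = m₆ - 3m₂m₄ + 2m₂³ + 12u²(m₄ - m₂²)`.
-/

open Set

section Weight

variable {α δ : ℝ}

lemma intervalIntegrable_sq_sub_sq_rpow (hα : 0 < α) (hδ : 0 < δ) :
    IntervalIntegrable (fun t => (δ ^ 2 - t ^ 2) ^ (α - 1)) volume (-δ) δ := by
  -- On `[0, δ]` only the factor `(δ - t) ^ (α - 1)` of `(δ - t) ^ (α - 1) * (δ + t) ^ (α - 1)` is
  -- singular; `[-δ, 0]` follows by evenness.
  have hright : IntervalIntegrable (fun t => (δ ^ 2 - t ^ 2) ^ (α - 1)) volume 0 δ := by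
    have hsing : IntervalIntegrable (fun t => (δ - t) ^ (α - 1)) volume 0 δ := by
      simpa using (intervalIntegral.intervalIntegrable_rpow' (r := α - 1) (by linarith)
        (a := δ) (b := 0)).comp_sub_left δ
    have hreg : ContinuousOn (fun t => (δ + t) ^ (α - 1)) (uIcc 0 δ) := by
      refine ContinuousOn.rpow_const (by fun_prop) fun t ht => Or.inl ?_
      rw [uIcc_of_le hδ.le] at ht
      linarith [ht.1]
    refine (hsing.mul_continuousOn hreg).congr fun t ht => ?_
    rw [uIoc_of_le hδ.le] at ht
    rw [← Real.mul_rpow (by linarith [ht.2]) (by linarith [ht.1])]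
    ring_nf
  have hleft : IntervalIntegrable (fun t => (δ ^ 2 - t ^ 2) ^ (α - 1)) volume (-δ) 0 := by
    rw [IntervalIntegrable.iff_comp_neg]
    simpa using hright.symm
  exact hleft.trans hright

lemma hasDerivAt_sq_sub_sq_rpow {t : ℝ} (ht : t ∈ Ioo (-δ) δ) :
    HasDerivAt (fun t => (δ ^ 2 - t ^ 2) ^ α) ((δ ^ 2 - t ^ 2) ^ (α - 1) * (-(2 * α) * t)) t := by
  have hpos : δ ^ 2 - t ^ 2 ≠ 0 := by nlinarith [ht.1, ht.2]
  convert ((hasDerivAt_pow 2 t).const_sub (δ ^ 2)).rpow_const (p := α) (Or.inl hpos) using 1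
  push_cast
  ring

lemma integral_sq_sub_sq_rpow_mul_pow_succ (hα : 0 < α) (hδ : 0 < δ) (n : ℕ) :
    2 * α * ∫ t in -δ..δ, (δ ^ 2 - t ^ 2) ^ (α - 1) * t ^ (n + 1) =
      n * ∫ t in -δ..δ, (δ ^ 2 - t ^ 2) ^ (α - 1) * ((δ ^ 2 - t ^ 2) * t ^ (n - 1)) := by
  have hw := intervalIntegrable_sq_sub_sq_rpow hα hδ
  have hminmax : Ioo (min (-δ) δ) (max (-δ) δ) = Ioo (-δ) δ := by
    rw [min_eq_left (by linarith), max_eq_right (by linarith)]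
  have hparts := intervalIntegral.integral_mul_deriv_eq_deriv_mul_of_hasDeriv_right
    (u := fun t => t ^ n) (v := fun t => (δ ^ 2 - t ^ 2) ^ α)
    (u' := fun t => n * t ^ (n - 1)) (v' := fun t => (δ ^ 2 - t ^ 2) ^ (α - 1) * (-(2 * α) * t))
    (a := -δ) (b := δ) (by fun_prop)
    (ContinuousOn.rpow_const (by fun_prop) fun _ _ => Or.inr hα.le)
    (fun t _ => (hasDerivAt_pow n t).hasDerivWithinAt)
    (fun t ht => (hasDerivAt_sq_sub_sq_rpow (hminmax ▸ ht)).hasDerivWithinAt)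
    ((by fun_prop : Continuous fun t : ℝ => n * t ^ (n - 1)).intervalIntegrable _ _)
    (hw.mul_continuousOn (by fun_prop))
  have hrpow : EqOn (fun t => n * t ^ (n - 1) * (δ ^ 2 - t ^ 2) ^ α)
      (fun t => n * ((δ ^ 2 - t ^ 2) ^ (α - 1) * ((δ ^ 2 - t ^ 2) * t ^ (n - 1))))
      (uIcc (-δ) δ) := by
    intro t ht
    rw [uIcc_of_le (by linarith)] at ht
    have hnonneg : 0 ≤ δ ^ 2 - t ^ 2 := by nlinarith [ht.1, ht.2]
    dsimp only
    rw [show α = (α - 1) + 1 by ring, Real.rpow_add' hnonneg (by linarith), Real.rpow_one]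
    ring_nf
  simp only [intervalIntegral.integral_congr hrpow, intervalIntegral.integral_const_mul, neg_sq,
    sub_self, Real.zero_rpow hα.ne', mul_zero, zero_sub] at hparts
  rw [← neg_eq_iff_eq_neg.mpr hparts, ← intervalIntegral.integral_const_mul,
    ← intervalIntegral.integral_neg]
  congr 1 with t
  ring

end Weight

noncomputable def symmBetaMeasure (α δ : ℝ) : Measure ℝ :=
  (volume.restrict (Ioo (-δ) δ)).withDensity fun t => ENNReal.ofReal (betaDensity α δ t)

section SymmBeta

variable {α δ : ℝ}

lemma betaDensity_nonneg (hα : 0 < α) {t : ℝ} (ht : t ∈ Ioo (-δ) δ) :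
    0 ≤ betaDensity α δ t := by
  have := Real.Gamma_pos_of_pos hα
  have := Real.Gamma_pos_of_pos (by linarith : 0 < 2 * α)
  have : 0 ≤ 2 * δ := by linarith [ht.1, ht.2]
  have : 0 ≤ δ ^ 2 - t ^ 2 := by nlinarith [ht.1, ht.2]
  unfold betaDensity
  positivity

lemma measurable_betaDensity : Measurable (betaDensity α δ) := by
  unfold betaDensity
  fun_prop

lemma symmBetaMeasure_eq_withDensity_toNNReal :
    symmBetaMeasure α δ = (volume.restrict (Ioo (-δ) δ)).withDensity
      fun t => ((betaDensity α δ t).toNNReal : ℝ≥0∞) := rfl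

lemma integral_symmBetaMeasure (hα : 0 < α) (hδ : 0 < δ) (g : ℝ → ℝ) :
    ∫ t, g t ∂symmBetaMeasure α δ = ∫ t in -δ..δ, betaDensity α δ t * g t := by
  rw [symmBetaMeasure_eq_withDensity_toNNReal,
    integral_withDensity_eq_integral_smul measurable_betaDensity.real_toNNReal,
    intervalIntegral.integral_of_le (by linarith), integral_Ioc_eq_integral_Ioo]
  refine setIntegral_congr_fun measurableSet_Ioo fun t ht => ?_
  rw [NNReal.smul_def, smul_eq_mul, Real.coe_toNNReal _ (betaDensity_nonneg hα ht)]

lemma integrable_pow_symmBetaMeasure (hα : 0 < α) (hδ : 0 < δ) (n : ℕ) :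
    Integrable (fun t => t ^ n) (symmBetaMeasure α δ) := by
  rw [symmBetaMeasure_eq_withDensity_toNNReal,
    integrable_withDensity_iff_integrable_smul measurable_betaDensity.real_toNNReal]
  have hint : IntegrableOn (fun t => betaDensity α δ t * t ^ n) (Ioo (-δ) δ) := by
    rw [← intervalIntegrable_iff_integrableOn_Ioo_of_le (by linarith)]
    simpa only [betaDensity, mul_assoc] using
      ((intervalIntegrable_sq_sub_sq_rpow hα hδ).mul_continuousOn
        (continuous_pow n).continuousOn).const_mul _
  refine hint.congr_fun (fun t ht => ?_) measurableSet_Ioo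
  rw [NNReal.smul_def, smul_eq_mul, Real.coe_toNNReal _ (betaDensity_nonneg hα ht)]

lemma integral_pow_add_two_symmBetaMeasure (hα : 0 < α) (hδ : 0 < δ) (n : ℕ) :
    (2 * α + n + 1) * ∫ t, t ^ (n + 2) ∂symmBetaMeasure α δ =
      (n + 1) * δ ^ 2 * ∫ t, t ^ n ∂symmBetaMeasure α δ := by
  have hw := intervalIntegrable_sq_sub_sq_rpow hα hδ
  have hstein := integral_sq_sub_sq_rpow_mul_pow_succ hα hδ (n + 1)
  have hsplit : ∫ t in -δ..δ, (δ ^ 2 - t ^ 2) ^ (α - 1) * ((δ ^ 2 - t ^ 2) * t ^ n) =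
      δ ^ 2 * (∫ t in -δ..δ, (δ ^ 2 - t ^ 2) ^ (α - 1) * t ^ n) -
        ∫ t in -δ..δ, (δ ^ 2 - t ^ 2) ^ (α - 1) * t ^ (n + 2) := by
    rw [← intervalIntegral.integral_const_mul, ← intervalIntegral.integral_sub
      ((hw.mul_continuousOn (continuous_pow n).continuousOn).const_mul _)
      (hw.mul_continuousOn (continuous_pow _).continuousOn)]
    congr 1 with t
    ring
  rw [Nat.add_sub_cancel, hsplit] at hstein
  simp only [integral_symmBetaMeasure hα hδ, betaDensity, mul_assoc,
    intervalIntegral.integral_const_mul]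
  push_cast at hstein
  linear_combination
    ((2 * δ) ^ (1 - 2 * α) / (Real.Gamma α * Real.Gamma α / Real.Gamma (2 * α))) * hstein

lemma integral_id_symmBetaMeasure (hα : 0 < α) (hδ : 0 < δ) :
    ∫ t, t ∂symmBetaMeasure α δ = 0 := by
  have hstein : 2 * α * ∫ t in -δ..δ, (δ ^ 2 - t ^ 2) ^ (α - 1) * t = 0 := by
    simpa using integral_sq_sub_sq_rpow_mul_pow_succ hα hδ 0
  have hweighted := (mul_eq_zero.mp hstein).resolve_left (by positivity)
  simp only [integral_symmBetaMeasure hα hδ, betaDensity, mul_assoc,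
    intervalIntegral.integral_const_mul, hweighted, mul_zero]

lemma integral_pow_two_mul_symmBetaMeasure (hα : 0 < α) (hδ : 0 < δ) (k : ℕ) :
    ∫ t, t ^ (2 * k) ∂symmBetaMeasure α δ =
      (∏ i ∈ Finset.range k, (2 * i + 1) * δ ^ 2 / (2 * α + 2 * i + 1)) *
        (symmBetaMeasure α δ).real univ := by
  induction k with
  | zero => simp
  | succ k ih =>
    have hrec := integral_pow_add_two_symmBetaMeasure hα hδ (2 * k)
    rw [Finset.prod_range_succ, mul_right_comm, ← ih, mul_add_one, mul_div_assoc',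
      eq_div_iff (by positivity)]
    push_cast at hrec
    linear_combination hrec

lemma integral_pow_two_mul_add_one_symmBetaMeasure (hα : 0 < α) (hδ : 0 < δ) (k : ℕ) :
    ∫ t, t ^ (2 * k + 1) ∂symmBetaMeasure α δ = 0 := by
  induction k with
  | zero => simpa using integral_id_symmBetaMeasure hα hδ
  | succ k ih =>
    have hrec := integral_pow_add_two_symmBetaMeasure hα hδ (2 * k + 1)
    rw [ih, mul_zero] at hrec
    exact (mul_eq_zero.mp hrec).resolve_left (by positivity)

end SymmBeta

lemma integral_sum_mul_pow {μ : Measure ℝ} (hint : ∀ n, Integrable (fun t => t ^ n) μ) {N : ℕ}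
    (c : Fin N → ℝ) :
    ∫ t, ∑ i, c i * t ^ (i : ℕ) ∂μ = ∑ i, c i * ∫ t, t ^ (i : ℕ) ∂μ := by
  rw [integral_finsetSum _ fun (i : Fin N) _ => (hint i).const_mul (c i)]
  simp only [integral_const_mul]

lemma integral_sq_sub_integral_sq_pow_three {μ : Measure ℝ} [IsProbabilityMeasure μ]
    (hint : ∀ n, Integrable (fun t => t ^ n) μ) (hodd : ∀ k, ∫ t, t ^ (2 * k + 1) ∂μ = 0)
    (u : ℝ) :
    ∫ t, ((t - u) ^ 2 - ∫ s, (s - u) ^ 2 ∂μ) ^ 3 ∂μ =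
      ∫ t, t ^ 6 ∂μ - 3 * (∫ t, t ^ 2 ∂μ) * ∫ t, t ^ 4 ∂μ + 2 * (∫ t, t ^ 2 ∂μ) ^ 3 +
        12 * u ^ 2 * (∫ t, t ^ 4 ∂μ - (∫ t, t ^ 2 ∂μ) ^ 2) := by
  have h0 : ∫ t, t ^ 0 ∂μ = 1 := by simp
  have h1 : ∫ t, t ^ 1 ∂μ = 0 := hodd 0
  have h3 : ∫ t, t ^ 3 ∂μ = 0 := hodd 1
  have h5 : ∫ t, t ^ 5 ∂μ = 0 := hodd 2
  have hmean : ∫ s, (s - u) ^ 2 ∂μ = u ^ 2 + ∫ t, t ^ 2 ∂μ := by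
    calc ∫ s, (s - u) ^ 2 ∂μ = ∫ t, ∑ i, ![u ^ 2, -2 * u, 1] i * t ^ (i : ℕ) ∂μ := by
          congr 1 with t
          simp only [Fin.sum_univ_succ, Fin.sum_univ_zero, Matrix.cons_val_zero,
            Matrix.cons_val_succ, Fin.val_zero, Fin.val_succ]
          ring
      _ = u ^ 2 + ∫ t, t ^ 2 ∂μ := by
          rw [integral_sum_mul_pow hint]
          simp only [Fin.sum_univ_succ, Fin.sum_univ_zero,
            Matrix.cons_val_zero, Matrix.cons_val_succ, Fin.val_zero, Fin.val_succ, Nat.reduceAdd,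
            h0, h1]
          ring
  -- `(t - u) ^ 2 - E (t - u) ^ 2 = t ^ 2 - 2 u t + a`, cubed
  set a := -∫ t, t ^ 2 ∂μ with ha
  calc ∫ t, ((t - u) ^ 2 - ∫ s, (s - u) ^ 2 ∂μ) ^ 3 ∂μ
      = ∫ t, ∑ i, ![a ^ 3, -6 * u * a ^ 2, 3 * a ^ 2 + 12 * u ^ 2 * a, -8 * u ^ 3 - 12 * u * a,
          3 * a + 12 * u ^ 2, -6 * u, 1] i * t ^ (i : ℕ) ∂μ := by
        congr 1 with t
        simp only [hmean, Fin.sum_univ_succ, Fin.sum_univ_zero, Matrix.cons_val_zero,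
          Matrix.cons_val_succ, Fin.val_zero, Fin.val_succ]
        ring
    _ = _ := by
        rw [integral_sum_mul_pow hint]
        simp only [Fin.sum_univ_succ, Fin.sum_univ_zero,
          Matrix.cons_val_zero, Matrix.cons_val_succ, Fin.val_zero, Fin.val_succ, Nat.reduceAdd,
          h0, h1, h3, h5, ha]
        ring

theorem thirdCentralMoment_sq_dist_beta {Ω : Type*} [MeasureSpace Ω]
    [IsProbabilityMeasure (ℙ : Measure Ω)]
    (α δ u : ℝ) (hα : 0 < α) (hδ : 0 < δ)
    (ξ : Ω → ℝ) (hξ : Measurable ξ)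
    (hlaw : Measure.map ξ ℙ =
      (volume.restrict (Set.Ioo (-δ) δ)).withDensity
        (fun t => ENNReal.ofReal (betaDensity α δ t))) :
    ∫ ω, ((ξ ω - u) ^ 2 - ∫ ω', (ξ ω' - u) ^ 2 ∂ℙ) ^ 3 ∂ℙ =
      48 * α * δ ^ 4 / ((2 * α + 1) ^ 2 * (2 * α + 3)) *
        (u ^ 2 + δ ^ 2 * (2 * α - 1) / (3 * (2 * α + 5) * (2 * α + 1))) := by
  change Measure.map ξ ℙ = symmBetaMeasure α δ at hlaw
  have : IsProbabilityMeasure (symmBetaMeasure α δ) :=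
    hlaw ▸ Measure.isProbabilityMeasure_map hξ.aemeasurable
  have hpush (g : ℝ → ℝ) (hg : Continuous g) :
      ∫ ω, g (ξ ω) ∂ℙ = ∫ t, g t ∂symmBetaMeasure α δ := by
    rw [← hlaw, integral_map hξ.aemeasurable hg.aestronglyMeasurable]
  rw [hpush (fun t => (t - u) ^ 2) (by fun_prop),
    hpush (fun t => ((t - u) ^ 2 - ∫ s, (s - u) ^ 2 ∂symmBetaMeasure α δ) ^ 3) (by fun_prop),
    integral_sq_sub_integral_sq_pow_three (integrable_pow_symmBetaMeasure hα hδ)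
      (integral_pow_two_mul_add_one_symmBetaMeasure hα hδ)]
  have hm2 := integral_pow_two_mul_symmBetaMeasure hα hδ 1
  have hm4 := integral_pow_two_mul_symmBetaMeasure hα hδ 2
  have hm6 := integral_pow_two_mul_symmBetaMeasure hα hδ 3
  simp only [Finset.prod_range_succ, Finset.prod_range_zero, Nat.reduceMul, probReal_univ]
    at hm2 hm4 hm6
  rw [hm2, hm4, hm6]
  field_simp
  ring
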